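/- arXiv:q-alg/9701025 — 2 statements merged into one kernel-verified Lean document; each statement's English description precedes it below -/
import Mathlib

section
/- Let N ≥ 2 be an integer, let i be an integer with 1 ≤ i ≤ N−1, and let k, ħ, w be real numbers. Define F(x) = x²/((x−ħ)(x+ħ)) and G(x) = ((x−ħ)(x+(k+N+1)ħ)) / ((x+ħ)(x+(k+N−1)ħ)). Assume every denominator occurring below is nonzero. Then [Π_{l=1}^{i−1} F(w+(k/2+l−1)ħ) · F(w+(k/2+l)ħ)] · F(w+(k/2+i−1)ħ) · F(w+(k/2+i)ħ)² · F(w+(k/2+i+1)ħ) · [Π_{l=i+2}^{N} F(w+(k/2+l−1)ħ) · F(w+(k/2+l)ħ)] · G(w − kħ/2) = ((w − kħ/2 − ħ)(w + kħ/2 + ħ)) / ((w − kħ/2 + ħ)(w + kħ/2 − ħ)). -/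
/-!
With `ρ x = (x - ℏ) / (x + ℏ)` (`exchangeRatio`) one has `F (x - ℏ) * F x = ρ x / ρ (x - ℏ)`, so, writing
`c = w + kℏ/2`, the pairs `F (c + (l - 1)ℏ) * F (c + lℏ)` telescope and all the `F`-factors
together give `ρ (c + Nℏ) / ρ c`. The `â`-factor is `G y = ρ y / ρ (c + Nℏ)` for
`y = w - kℏ/2`, and the right-hand side is `ρ y / ρ c`.
-/

open Finset

theorem Finset.prod_Ico_div₀ {M : Type*} [CommGroupWithZero M] (g : ℕ → M) {m n : ℕ}
    (hmn : m ≤ n) (hg : ∀ j ∈ Icc m n, g j ≠ 0) :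
    ∏ j ∈ Ico m n, g (j + 1) / g j = g n / g m := by
  induction n, hmn using Nat.le_induction with
  | base => simp [div_self (hg m (by simp))]
  | succ n hmn ih =>
    rw [prod_Ico_succ_top hmn, ih fun j hj => hg j (Icc_subset_Icc_right n.le_succ hj),
      div_mul_div_cancel₀' (hg n (by simp [hmn]))]

section Exchange

variable {K : Type*} [Field K]

def exchangeFactor (ℏ x : K) : K := x ^ 2 / ((x - ℏ) * (x + ℏ))

def exchangeRatio (ℏ x : K) : K := (x - ℏ) / (x + ℏ)

theorem exchangeRatio_ne_zero_iff {ℏ x : K} :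
    exchangeRatio ℏ x ≠ 0 ↔ x - ℏ ≠ 0 ∧ x + ℏ ≠ 0 := by
  simp [exchangeRatio, not_or]

theorem exchangeRatio_div_exchangeRatio (ℏ x y : K) :
    exchangeRatio ℏ x / exchangeRatio ℏ y = (x - ℏ) * (y + ℏ) / ((x + ℏ) * (y - ℏ)) :=
  div_div_div_eq _ _ _ _

theorem exchangeFactor_sub_mul_exchangeFactor {ℏ x : K} (hx : exchangeRatio ℏ x ≠ 0)
    (hxl : exchangeRatio ℏ (x - ℏ) ≠ 0) :
    exchangeFactor ℏ (x - ℏ) * exchangeFactor ℏ x =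
      exchangeRatio ℏ x / exchangeRatio ℏ (x - ℏ) := by
  obtain ⟨h₁, h₂⟩ := exchangeRatio_ne_zero_iff.1 hx
  obtain ⟨h₃, h₄⟩ := exchangeRatio_ne_zero_iff.1 hxl
  rw [sub_add_cancel] at h₄
  unfold exchangeFactor exchangeRatio
  rw [sub_add_cancel]
  field_simp

theorem exchangeFactor_sub_mul_sq_mul_add {ℏ x : K} (hx : exchangeRatio ℏ x ≠ 0)
    (hxl : exchangeRatio ℏ (x - ℏ) ≠ 0) (hxr : exchangeRatio ℏ (x + ℏ) ≠ 0) :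
    exchangeFactor ℏ (x - ℏ) * exchangeFactor ℏ x ^ 2 * exchangeFactor ℏ (x + ℏ) =
      exchangeRatio ℏ (x + ℏ) / exchangeRatio ℏ (x - ℏ) := by
  have hpair := exchangeFactor_sub_mul_exchangeFactor (x := x + ℏ) hxr
    (by rwa [add_sub_cancel_right])
  rw [add_sub_cancel_right] at hpair
  calc _ = (exchangeFactor ℏ (x - ℏ) * exchangeFactor ℏ x) *
        (exchangeFactor ℏ x * exchangeFactor ℏ (x + ℏ)) := by ring
    _ = _ := by rw [exchangeFactor_sub_mul_exchangeFactor hx hxl, hpair, div_mul_div_cancel₀' hx]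

theorem prod_Icc_exchangeFactor_mul_exchangeFactor (ℏ c : K) {m n : ℕ} (hmn : m ≤ n)
    (h : ∀ j ∈ Icc m n, exchangeRatio ℏ (c + j * ℏ) ≠ 0) :
    ∏ l ∈ Icc (m + 1) n, exchangeFactor ℏ (c + l * ℏ - ℏ) * exchangeFactor ℏ (c + l * ℏ) =
      exchangeRatio ℏ (c + n * ℏ) / exchangeRatio ℏ (c + m * ℏ) := by
  rw [← Ico_add_one_right_eq_Icc, ← prod_Ico_add', ← prod_Ico_div₀ _ hmn h]
  refine prod_congr rfl fun j hj => ?_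
  have e : c + ((j + 1 : ℕ) : K) * ℏ - ℏ = c + j * ℏ := by push_cast; ring
  rw [exchangeFactor_sub_mul_exchangeFactor, e]
  · exact h (j + 1) (by simp at hj ⊢; omega)
  · rw [e]
    exact h j (Ico_subset_Icc_self hj)

theorem exchangeFactor_diagonal_prod (ℏ c : K) {i N : ℕ} (hi : 1 ≤ i) (hiN : i + 1 ≤ N)
    (h : ∀ j ≤ N, exchangeRatio ℏ (c + j * ℏ) ≠ 0) :
    (∏ l ∈ Icc 1 (i - 1),
        exchangeFactor ℏ (c + l * ℏ - ℏ) * exchangeFactor ℏ (c + l * ℏ)) *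
      exchangeFactor ℏ (c + i * ℏ - ℏ) * exchangeFactor ℏ (c + i * ℏ) ^ 2 *
      exchangeFactor ℏ (c + i * ℏ + ℏ) *
      (∏ l ∈ Icc (i + 2) N,
        exchangeFactor ℏ (c + l * ℏ - ℏ) * exchangeFactor ℏ (c + l * ℏ)) =
    exchangeRatio ℏ (c + N * ℏ) / exchangeRatio ℏ c := by
  have e_pred : c + ((i - 1 : ℕ) : K) * ℏ = c + i * ℏ - ℏ := by rw [Nat.cast_sub hi]; ring
  have e_succ : c + ((i + 1 : ℕ) : K) * ℏ = c + i * ℏ + ℏ := by push_cast; ring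
  have h_pred : exchangeRatio ℏ (c + i * ℏ - ℏ) ≠ 0 := e_pred ▸ h (i - 1) (by omega)
  have h_succ : exchangeRatio ℏ (c + i * ℏ + ℏ) ≠ 0 := e_succ ▸ h (i + 1) hiN
  have hleft := prod_Icc_exchangeFactor_mul_exchangeFactor ℏ c (m := 0) (n := i - 1) (by omega)
    fun j hj => h j (by simp at hj; omega)
  have hright := prod_Icc_exchangeFactor_mul_exchangeFactor ℏ c (m := i + 1) (n := N) hiN
    fun j hj => h j (mem_Icc.1 hj).2
  simp only [zero_add, Nat.cast_zero, zero_mul, add_zero, e_pred] at hleft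
  rw [e_succ] at hright
  calc _ = exchangeRatio ℏ (c + i * ℏ - ℏ) / exchangeRatio ℏ c *
        (exchangeRatio ℏ (c + i * ℏ + ℏ) / exchangeRatio ℏ (c + i * ℏ - ℏ)) *
        (exchangeRatio ℏ (c + N * ℏ) / exchangeRatio ℏ (c + i * ℏ + ℏ)) := by
        rw [hleft, hright, ← exchangeFactor_sub_mul_sq_mul_add (h i (by omega)) h_pred h_succ]
        ring
    _ = _ := by rw [div_mul_div_cancel₀' h_pred, div_mul_div_cancel₀' h_succ]

end Exchange

theorem statement9_general (N i : ℕ) (hi1 : 1 ≤ i) (hi2 : i ≤ N - 1)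
    (k ℏ w : ℝ) (F G : ℝ → ℝ)
    (hF : ∀ x, F x = x ^ 2 / ((x - ℏ) * (x + ℏ)))
    (hG : ∀ x, G x = ((x - ℏ) * (x + (k + N + 1) * ℏ)) / ((x + ℏ) * (x + (k + N - 1) * ℏ)))
    (hdenF : ∀ m : ℕ, m ≤ N →
      w + (k / 2 + m) * ℏ - ℏ ≠ 0 ∧ w + (k / 2 + m) * ℏ + ℏ ≠ 0) :
    (∏ l ∈ Finset.Icc 1 (i - 1),
        F (w + (k / 2 + l - 1) * ℏ) * F (w + (k / 2 + l) * ℏ)) *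
      F (w + (k / 2 + i - 1) * ℏ) * F (w + (k / 2 + i) * ℏ) ^ 2 *
      F (w + (k / 2 + i + 1) * ℏ) *
      (∏ l ∈ Finset.Icc (i + 2) N,
        F (w + (k / 2 + l - 1) * ℏ) * F (w + (k / 2 + l) * ℏ)) *
      G (w - k * ℏ / 2)
    = ((w - k * ℏ / 2 - ℏ) * (w + k * ℏ / 2 + ℏ)) /
        ((w - k * ℏ / 2 + ℏ) * (w + k * ℏ / 2 - ℏ)) := by
  obtain rfl : F = exchangeFactor ℏ := funext hF
  set c := w + k * ℏ / 2
  set y := w - k * ℏ / 2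
  have hc : ∀ t : ℝ, w + (k / 2 + t) * ℏ = c + t * ℏ := fun t => by ring
  have hc_sub : ∀ t : ℝ, w + (k / 2 + t - 1) * ℏ = c + t * ℏ - ℏ := fun t => by ring
  have hc_add : ∀ t : ℝ, w + (k / 2 + t + 1) * ℏ = c + t * ℏ + ℏ := fun t => by ring
  simp only [hc, hc_sub, hc_add] at hdenF ⊢
  have hρ (j : ℕ) (hj : j ≤ N) : exchangeRatio ℏ (c + j * ℏ) ≠ 0 :=
    exchangeRatio_ne_zero_iff.2 (hdenF j hj)
  have hG' : G y = exchangeRatio ℏ y / exchangeRatio ℏ (c + N * ℏ) := by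
    rw [hG, exchangeRatio_div_exchangeRatio]
    simp only [c, y]
    ring
  rw [exchangeFactor_diagonal_prod ℏ c hi1 (by omega) hρ, hG',
    div_mul_div_cancel₀' (hρ N le_rfl)]
  exact exchangeRatio_div_exchangeRatio ℏ y c

/-- the scalar verification of the diagonal `H⁺–H⁻` exchange
relation for the level-`k` bosonization of `DY_ℏ(sl_N)`: with
`F x = x²/((x-ℏ)(x+ℏ))` and
`G x = ((x-ℏ)(x+(k+N+1)ℏ)) / ((x+ℏ)(x+(k+N-1)ℏ))`, assuming all occurring
denominators are nonzero, the indicated product of exchange factors equals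
`((w - kℏ/2 - ℏ)(w + kℏ/2 + ℏ)) / ((w - kℏ/2 + ℏ)(w + kℏ/2 - ℏ))`. -/
theorem statement9 (N i : ℕ) (hN : 2 ≤ N) (hi1 : 1 ≤ i) (hi2 : i ≤ N - 1)
    (k ℏ w : ℝ) (F G : ℝ → ℝ)
    (hF : ∀ x, F x = x ^ 2 / ((x - ℏ) * (x + ℏ)))
    (hG : ∀ x, G x = ((x - ℏ) * (x + (k + N + 1) * ℏ)) / ((x + ℏ) * (x + (k + N - 1) * ℏ)))
    (hdenF : ∀ m : ℕ, m ≤ N →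
      w + (k / 2 + m) * ℏ - ℏ ≠ 0 ∧ w + (k / 2 + m) * ℏ + ℏ ≠ 0)
    (hdenG1 : w - k * ℏ / 2 + ℏ ≠ 0)
    (hdenG2 : w - k * ℏ / 2 + (k + N - 1) * ℏ ≠ 0)
    (hdenR : w + k * ℏ / 2 - ℏ ≠ 0) :
    (∏ l ∈ Finset.Icc 1 (i - 1),
        F (w + (k / 2 + l - 1) * ℏ) * F (w + (k / 2 + l) * ℏ)) *
      F (w + (k / 2 + i - 1) * ℏ) * F (w + (k / 2 + i) * ℏ) ^ 2 *
      F (w + (k / 2 + i + 1) * ℏ) *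
      (∏ l ∈ Finset.Icc (i + 2) N,
        F (w + (k / 2 + l - 1) * ℏ) * F (w + (k / 2 + l) * ℏ)) *
      G (w - k * ℏ / 2)
    = ((w - k * ℏ / 2 - ℏ) * (w + k * ℏ / 2 + ℏ)) /
        ((w - k * ℏ / 2 + ℏ) * (w + k * ℏ / 2 - ℏ)) :=
  statement9_general N i hi1 hi2 k ℏ w F G hF hG hdenF
end

section
/- Let u, v, ħ, B, K be real numbers with u > 0, u + Kħ > 0, |v + Bħ| < min(u, u+Kħ) and |v − Bħ| < min(u, u+Kħ), and additionally u − v + Bħ ≠ 0 and u − v + (K−B)ħ ≠ 0. Then exp( Σ_{n≥1} (1/n)[(v+Bħ)^n − (v−Bħ)^n][(u+Kħ)^{−n} − u^{−n}] ) = (u−v−Bħ)(u−v+(K+B)ħ) / ((u−v+Bħ)(u−v+(K−B)ħ)). -/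
/-- exponentiated form of the `â₊–â₋` contraction: for real
`u v ℏ B K` with `u > 0`, `u + Kℏ > 0`, `|v ± Bℏ| < min u (u + Kℏ)`,
`u - v + Bℏ ≠ 0` and `u - v + (K-B)ℏ ≠ 0`,
`exp (Σ_{n≥1} (1/n)[(v+Bℏ)^n - (v-Bℏ)^n][(u+Kℏ)^{-n} - u^{-n}])
  = (u-v-Bℏ)(u-v+(K+B)ℏ) / ((u-v+Bℏ)(u-v+(K-B)ℏ))`. -/
theorem statement11 (u v ℏ B K : ℝ) (h1 : 0 < u) (h2 : 0 < u + K * ℏ)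
    (h3 : |v + B * ℏ| < min u (u + K * ℏ)) (h4 : |v - B * ℏ| < min u (u + K * ℏ))
    (h5 : u - v + B * ℏ ≠ 0) (h6 : u - v + (K - B) * ℏ ≠ 0) :
    Real.exp
      (∑' n : ℕ,
        (1 / (n + 1 : ℝ)) * ((v + B * ℏ) ^ (n + 1) - (v - B * ℏ) ^ (n + 1)) *
          (((u + K * ℏ) ^ (n + 1))⁻¹ - (u ^ (n + 1))⁻¹))
      = (u - v - B * ℏ) * (u - v + (K + B) * ℏ) /
          ((u - v + B * ℏ) * (u - v + (K - B) * ℏ)) := by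
  set a := v + B * ℏ with ha
  set b := v - B * ℏ with hb
  set C := u + K * ℏ with hC
  have hau : |a / u| < 1 := by
    rw [abs_div, abs_of_pos h1, div_lt_one h1]; exact lt_of_lt_of_le h3 (min_le_left _ _)
  have haC : |a / C| < 1 := by
    rw [abs_div, abs_of_pos h2, div_lt_one h2]; exact lt_of_lt_of_le h3 (min_le_right _ _)
  have hbu : |b / u| < 1 := by
    rw [abs_div, abs_of_pos h1, div_lt_one h1]; exact lt_of_lt_of_le h4 (min_le_left _ _)
  have hbC : |b / C| < 1 := by
    rw [abs_div, abs_of_pos h2, div_lt_one h2]; exact lt_of_lt_of_le h4 (min_le_right _ _)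
  have H1 := Real.hasSum_pow_div_log_of_abs_lt_one haC
  have H2 := Real.hasSum_pow_div_log_of_abs_lt_one hau
  have H3 := Real.hasSum_pow_div_log_of_abs_lt_one hbC
  have H4 := Real.hasSum_pow_div_log_of_abs_lt_one hbu
  have Hsum := (H1.sub H2).sub (H3.sub H4)
  have key : (fun n : ℕ =>
      (1 / (n + 1 : ℝ)) * (a ^ (n + 1) - b ^ (n + 1)) *
        ((C ^ (n + 1))⁻¹ - (u ^ (n + 1))⁻¹)) =
      fun n : ℕ => ((a / C) ^ (n + 1) / (n + 1) - (a / u) ^ (n + 1) / (n + 1)) -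
        ((b / C) ^ (n + 1) / (n + 1) - (b / u) ^ (n + 1) / (n + 1)) := by
    funext n
    simp only [div_pow]
    field_simp
  rw [key, Hsum.tsum_eq]
  -- positivity of the four factors
  have p1 : 0 < 1 - a / C := by linarith [abs_lt.1 haC]
  have p2 : 0 < 1 - a / u := by linarith [abs_lt.1 hau]
  have p3 : 0 < 1 - b / C := by linarith [abs_lt.1 hbC]
  have p4 : 0 < 1 - b / u := by linarith [abs_lt.1 hbu]
  have : (-Real.log (1 - a / C) - -Real.log (1 - a / u)) -
      (-Real.log (1 - b / C) - -Real.log (1 - b / u)) =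
      Real.log ((1 - a / u) * (1 - b / C) / ((1 - a / C) * (1 - b / u))) := by
    rw [Real.log_div (by positivity) (by positivity), Real.log_mul (ne_of_gt p2) (ne_of_gt p3),
      Real.log_mul (ne_of_gt p1) (ne_of_gt p4)]
    ring
  rw [this, Real.exp_log (by positivity)]
  have hCa : C - a ≠ 0 := by
    rw [hC, ha]; intro h; apply h6; linarith [sub_eq_zero.mp h]
  have hub : u - b ≠ 0 := by
    rw [hb]; intro h; apply h5; linarith [sub_eq_zero.mp h]
  have e1 : 1 - a / u = (u - a) / u := by field_simp
  have e2 : 1 - b / C = (C - b) / C := by field_simp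
  have e3 : 1 - a / C = (C - a) / C := by field_simp
  have e4 : 1 - b / u = (u - b) / u := by field_simp
  rw [e1, e2, e3, e4]
  have goal_eq : u - v - B * ℏ = u - a := by rw [ha]; ring
  have g2 : u - v + (K + B) * ℏ = C - b := by rw [hC, hb]; ring
  have g3 : u - v + B * ℏ = u - b := by rw [hb]; ring
  have g4 : u - v + (K - B) * ℏ = C - a := by rw [hC, ha]; ring
  rw [goal_eq, g2, g3, g4]
  field_simp
end
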